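/- Consider the chain complexes of abelian groups: A with A_1 = A_0 = ℤ and differential multiplication by 16; B with B_2 = ℤ, B_1 = ℤ ⊕ ℤ, B_0 = ℤ, differentials ∂_2(u) = (16u, 0) and ∂_1(v,w) = 8w; C with C_2 = C_1 = ℤ and differential multiplication by 16; D with D_2 = D_1 = ℤ and differential multiplication by 16 (all other terms 0). Let f : A → B have f_1(a) = (a, 2a) and f_0 = 1; let g : B → C have g_2 = 8 and g_1(v,w) = 8v + 4w; let h : C → D have h_2 = 2 and h_1 = 2. Then f, g, h are chain maps, g∘f and h∘g are nullhomotopic, and for EVERY nullhomotopy S of g∘f and EVERY nullhomotopy T of h∘g, the Toda map φ(S,T) : ΣA → D is not chain homotopic to zero. (Hence the Toda bracket ⟨h,g,f⟩ does not vanish.) -/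

import Mathlib

/-! STATEMENT 19.  Chain complexes of abelian groups are encoded as families
`M r : ℤ → Type`, `(M r) m = Fin (r m) → ℤ` (so `ℤ^{r m}` in degree `m`), with
differentials `d m : (M r) (m+1) →ₗ[ℤ] (M r) m` given by integer matrices.  Here
`B` has `B₂ = ℤ`, `B₁ = ℤ ⊕ ℤ`, `B₀ = ℤ`, with `∂₂ u = (16u, 0)` and
`∂₁ (v,w) = 8w`. -/

abbrev M (r : ℤ → ℕ) (m : ℤ) : Type := Fin (r m) → ℤ

/-- A has ℤ in degrees 0 and 1 -/
def rA : ℤ → ℕ := fun m => if m = 0 ∨ m = 1 then 1 else 0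
/-- B has ℤ in degrees 0 and 2, and ℤ ⊕ ℤ in degree 1 -/
def rB : ℤ → ℕ := fun m => if m = 1 then 2 else if m = 0 ∨ m = 2 then 1 else 0
/-- C has ℤ in degrees 1 and 2 -/
def rC : ℤ → ℕ := fun m => if m = 1 ∨ m = 2 then 1 else 0
/-- D has ℤ in degrees 1 and 2 -/
def rD : ℤ → ℕ := fun m => if m = 1 ∨ m = 2 then 1 else 0

/-- A = (ℤ --16--> ℤ) in degrees 1 → 0 -/
noncomputable def dA (m : ℤ) : M rA (m+1) →ₗ[ℤ] M rA m :=
  Matrix.mulVecLin (Matrix.of fun _ _ => if m = 0 then (16:ℤ) else 0)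

/-- B: `∂₂ u = (16u, 0) : B₂ → B₁` and `∂₁ (v,w) = 8w : B₁ → B₀` -/
noncomputable def dB (m : ℤ) : M rB (m+1) →ₗ[ℤ] M rB m :=
  Matrix.mulVecLin (Matrix.of fun i j =>
    if m = 1 then (if (i : ℕ) = 0 then (16:ℤ) else 0)
    else if m = 0 then (if (j : ℕ) = 1 then 8 else 0)
    else 0)

/-- C = (ℤ --16--> ℤ) in degrees 2 → 1 -/
noncomputable def dC (m : ℤ) : M rC (m+1) →ₗ[ℤ] M rC m :=
  Matrix.mulVecLin (Matrix.of fun _ _ => if m = 1 then (16:ℤ) else 0)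

/-- D = (ℤ --16--> ℤ) in degrees 2 → 1 -/
noncomputable def dD (m : ℤ) : M rD (m+1) →ₗ[ℤ] M rD m :=
  Matrix.mulVecLin (Matrix.of fun _ _ => if m = 1 then (16:ℤ) else 0)

/-- f : A → B with f₁ a = (a, 2a) and f₀ = 1 -/
noncomputable def fm (m : ℤ) : M rA m →ₗ[ℤ] M rB m :=
  Matrix.mulVecLin (Matrix.of fun i _ =>
    if m = 1 then (if (i : ℕ) = 0 then (1:ℤ) else 2)
    else if m = 0 then 1
    else 0)

/-- g : B → C with g₂ = 8 and g₁ (v,w) = 8v + 4w -/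
noncomputable def gm (m : ℤ) : M rB m →ₗ[ℤ] M rC m :=
  Matrix.mulVecLin (Matrix.of fun _ j =>
    if m = 2 then (8:ℤ)
    else if m = 1 then (if (j : ℕ) = 0 then 8 else 4)
    else 0)

/-- h : C → D with h₂ = 2 and h₁ = 2 -/
noncomputable def hm (m : ℤ) : M rC m →ₗ[ℤ] M rD m :=
  Matrix.mulVecLin (Matrix.of fun _ _ => if m = 2 ∨ m = 1 then (2:ℤ) else 0)

/-! The nullhomotopy equation `h g = ∂T + T∂` on the generator of `B₂` reads `16 = 16 T₁(1, 0)`,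
because `D₃ = 0`; so `T₁(1, 0) = 1`. On the generator `a` of `A₁` the Toda map therefore takes the
value `h S a − T₁(1, 0) − 2 T₁(0, 1)`, which is odd since `h = 2`. A nullhomotopy `U` of the Toda
map would make this value `∂U a − U(∂a) = −16 U(a₀)`, which is even (again as `D₃ = 0`).

The chain-map and homotopy identities hold for degree reasons (source or target is `0`) in all but
one or two degrees, where they are finite integer-matrix computations. -/

theorem LinearMap.eq_of_fin_eq_zero {R : Type*} [Semiring R] {k l : ℕ} (h : k = 0 ∨ l = 0)
    (φ ψ : (Fin k → R) →ₗ[R] (Fin l → R)) : φ = ψ := by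
  rcases h with rfl | rfl <;> exact Subsingleton.elim φ ψ

instance : NeZero (rB 1) := ⟨by decide⟩

instance : NeZero (rD 2) := ⟨by decide⟩

theorem dA_comp_dA (m : ℤ) : (dA m).comp (dA (m+1)) = 0 :=
  LinearMap.eq_of_fin_eq_zero (by unfold rA; split_ifs <;> omega) _ _

theorem dB_comp_dB (m : ℤ) : (dB m).comp (dB (m+1)) = 0 := by
  obtain rfl | hm0 := eq_or_ne m 0
  · ext i j; revert i j; decide
  · exact LinearMap.eq_of_fin_eq_zero (by unfold rB; split_ifs <;> omega) _ _

theorem dC_comp_dC (m : ℤ) : (dC m).comp (dC (m+1)) = 0 :=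
  LinearMap.eq_of_fin_eq_zero (by unfold rC; split_ifs <;> omega) _ _

theorem dD_comp_dD (m : ℤ) : (dD m).comp (dD (m+1)) = 0 :=
  LinearMap.eq_of_fin_eq_zero (by unfold rD; split_ifs <;> omega) _ _

theorem dB_comp_fm (m : ℤ) : (dB m).comp (fm (m+1)) = (fm m).comp (dA m) := by
  obtain rfl | hm0 := eq_or_ne m 0
  · ext i j; revert i j; decide
  · exact LinearMap.eq_of_fin_eq_zero (by unfold rA rB; split_ifs <;> omega) _ _

theorem dC_comp_gm (m : ℤ) : (dC m).comp (gm (m+1)) = (gm m).comp (dB m) := by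
  obtain rfl | hm1 := eq_or_ne m 1
  · ext i j; revert i j; decide
  · exact LinearMap.eq_of_fin_eq_zero (by unfold rB rC; split_ifs <;> omega) _ _

theorem dD_comp_hm (m : ℤ) : (dD m).comp (hm (m+1)) = (hm m).comp (dC m) := by
  obtain rfl | hm1 := eq_or_ne m 1
  · ext i j; revert i j; decide
  · exact LinearMap.eq_of_fin_eq_zero (by unfold rC rD; split_ifs <;> omega) _ _

noncomputable def gfNullhomotopy (t : ℤ) : M rA t →ₗ[ℤ] M rC (t+1) :=
  Matrix.mulVecLin (Matrix.of fun _ _ => if t = 1 then (1:ℤ) else 0)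

noncomputable def hgNullhomotopy (t : ℤ) : M rB t →ₗ[ℤ] M rD (t+1) :=
  Matrix.mulVecLin (Matrix.of fun _ j =>
    if t = 1 then (if (j : ℕ) = 0 then (1:ℤ) else 0) else if t = 0 then 1 else 0)

theorem gfNullhomotopy_spec (t : ℤ) : (gm (t+1)).comp (fm (t+1)) =
    (dC (t+1)).comp (gfNullhomotopy (t+1)) + (gfNullhomotopy t).comp (dA t) := by
  obtain rfl | ht0 := eq_or_ne t 0
  · ext i j; revert i j; decide
  · exact LinearMap.eq_of_fin_eq_zero (by unfold rA rC; split_ifs <;> omega) _ _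

theorem hgNullhomotopy_spec (t : ℤ) : (hm (t+1)).comp (gm (t+1)) =
    (dD (t+1)).comp (hgNullhomotopy (t+1)) + (hgNullhomotopy t).comp (dB t) := by
  obtain rfl | rfl | ht : t = 0 ∨ t = 1 ∨ (t ≠ 0 ∧ t ≠ 1) := by omega
  · ext i j; revert i j; decide
  · ext i j; revert i j; decide
  · exact LinearMap.eq_of_fin_eq_zero (by unfold rB rD; split_ifs <;> omega) _ _

theorem dD_two_eq_zero : dD 2 = 0 :=
  LinearMap.eq_of_fin_eq_zero (.inl (by decide)) _ _

theorem two_dvd_hm_apply (m : ℤ) (x : M rC m) (i : Fin (rD m)) : 2 ∣ hm m x i := by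
  simp only [hm, Matrix.mulVecLin_apply, Matrix.mulVec, dotProduct, Matrix.of_apply]
  exact Finset.dvd_sum fun j _ => Dvd.dvd.mul_right (by split_ifs <;> norm_num) _

theorem hm_two_gm_two_apply_one : hm 2 (gm 2 1) = fun _ => 16 := by decide

theorem dB_one_apply_one : dB 1 1 = (16 : ℤ) • Pi.single 0 1 := by decide

theorem fm_one_apply_one : fm 1 1 = Pi.single 0 1 + (2 : ℤ) • Pi.single 1 1 := by decide

theorem dA_zero_apply_one : dA 0 1 = (16 : ℤ) • 1 := by decide

theorem apply_single_zero_eq_one_of_hm_comp_gm_eq (T : ∀ t : ℤ, M rB t →ₗ[ℤ] M rD (t+1))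
    (hT : ∀ t : ℤ, (hm (t+1)).comp (gm (t+1)) = (dD (t+1)).comp (T (t+1)) + (T t).comp (dB t)) :
    T 1 (Pi.single 0 1) (0 : Fin (rD 2)) = 1 := by
  have h : hm 2 (gm 2 1) (0 : Fin (rD 2)) = dD 2 (T 2 1) 0 + T 1 (dB 1 1) (0 : Fin (rD 2)) :=
    congrFun (LinearMap.congr_fun (hT 1) 1) (0 : Fin (rD 2))
  rw [hm_two_gm_two_apply_one, dD_two_eq_zero, dB_one_apply_one, map_smul] at h
  simp only [LinearMap.zero_apply, Pi.zero_apply, zero_add, Pi.smul_apply, smul_eq_mul] at h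
  omega

theorem toda_not_nullhomotopic (S : ∀ t : ℤ, M rA t →ₗ[ℤ] M rC (t+1))
    (T : ∀ t : ℤ, M rB t →ₗ[ℤ] M rD (t+1))
    (hT : ∀ t : ℤ, (hm (t+1)).comp (gm (t+1)) = (dD (t+1)).comp (T (t+1)) + (T t).comp (dB t)) :
    ¬ ∃ U : ∀ t : ℤ, M rA t →ₗ[ℤ] M rD (t+1+1),
      ∀ t : ℤ, (hm (t+1+1)).comp (S (t+1)) - (T (t+1)).comp (fm (t+1))
        = (dD (t+1+1)).comp (U (t+1)) - (U t).comp (dA t) := by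
  rintro ⟨U, hU⟩
  have h : hm 2 (S 1 1) 0 - T 1 (fm 1 1) (0 : Fin (rD 2))
      = dD 2 (U 1 1) 0 - U 0 (dA 0 1) (0 : Fin (rD 2)) :=
    congrFun (LinearMap.congr_fun (hU 0) 1) (0 : Fin (rD 2))
  rw [fm_one_apply_one, dA_zero_apply_one, dD_two_eq_zero, map_add, map_smul, map_smul] at h
  simp only [LinearMap.zero_apply, Pi.zero_apply, Pi.add_apply, Pi.smul_apply, smul_eq_mul,
    apply_single_zero_eq_one_of_hm_comp_gm_eq T hT] at h
  obtain ⟨k, hk⟩ := two_dvd_hm_apply 2 (S 1 1) 0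
  omega

theorem statement19 :
    -- the four graded objects are chain complexes:
    (∀ m : ℤ, (dA m).comp (dA (m+1)) = 0) ∧ (∀ m : ℤ, (dB m).comp (dB (m+1)) = 0) ∧
    (∀ m : ℤ, (dC m).comp (dC (m+1)) = 0) ∧ (∀ m : ℤ, (dD m).comp (dD (m+1)) = 0) ∧
    -- f, g, h are chain maps:
    (∀ m : ℤ, (dB m).comp (fm (m+1)) = (fm m).comp (dA m)) ∧
    (∀ m : ℤ, (dC m).comp (gm (m+1)) = (gm m).comp (dB m)) ∧
    (∀ m : ℤ, (dD m).comp (hm (m+1)) = (hm m).comp (dC m)) ∧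
    -- g∘f is nullhomotopic:
    (∃ S : ∀ t : ℤ, M rA t →ₗ[ℤ] M rC (t+1),
      ∀ t : ℤ, (gm (t+1)).comp (fm (t+1)) = (dC (t+1)).comp (S (t+1)) + (S t).comp (dA t)) ∧
    -- h∘g is nullhomotopic:
    (∃ T : ∀ t : ℤ, M rB t →ₗ[ℤ] M rD (t+1),
      ∀ t : ℤ, (hm (t+1)).comp (gm (t+1)) = (dD (t+1)).comp (T (t+1)) + (T t).comp (dB t)) ∧
    -- for EVERY such S and T, the Toda map φ(S,T) : ΣA → D, with components
    -- φ out of (ΣA)_{t+1} = A_t given by h∘S − T∘f, is not chain homotopic to zero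
    -- (the suspension differential being −∂_A):
    (∀ (S : ∀ t : ℤ, M rA t →ₗ[ℤ] M rC (t+1)) (T : ∀ t : ℤ, M rB t →ₗ[ℤ] M rD (t+1)),
      (∀ t : ℤ, (gm (t+1)).comp (fm (t+1)) = (dC (t+1)).comp (S (t+1)) + (S t).comp (dA t)) →
      (∀ t : ℤ, (hm (t+1)).comp (gm (t+1)) = (dD (t+1)).comp (T (t+1)) + (T t).comp (dB t)) →
      ¬ ∃ U : ∀ t : ℤ, M rA t →ₗ[ℤ] M rD (t+1+1),
          ∀ t : ℤ, (hm (t+1+1)).comp (S (t+1)) - (T (t+1)).comp (fm (t+1))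
            = (dD (t+1+1)).comp (U (t+1)) - (U t).comp (dA t)) :=
  ⟨dA_comp_dA, dB_comp_dB, dC_comp_dC, dD_comp_dD, dB_comp_fm, dC_comp_gm, dD_comp_hm,
    ⟨gfNullhomotopy, gfNullhomotopy_spec⟩, ⟨hgNullhomotopy, hgNullhomotopy_spec⟩,
    fun S T _ hT => toda_not_nullhomotopic S T hT⟩
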